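/- Fix an integer ρ with 4 ≤ ρ ≤ 10, let x⊙y = xᵀJ_ρy, D = (1,…,1), and E_1 = {n ∈ ℤ^ρ : n⊙n = 1 and n⊙D < 0}. Then for every i ∈ {1,…,ρ}, the hyperplane H_{e_i} is a face of K_ρ = ∩_{n ∈ E_1}{x : n⊙x ≤ 0}; precisely, there exists x ∈ ℝ^ρ with x⊙x = −1, x⊙D < 0, e_i⊙x = 0, and n⊙x < 0 for every n ∈ E_1 with n ≠ e_i. (In particular each e_i ∈ E_1, and the Apollonian configuration contains the cluster of ρ mutually tangent hyperspheres e_1,…,e_ρ.) -/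

import Mathlib

/-! The point `y = (ρ - 2) e_i + D` satisfies `n ⊙ y = 2 (ρ - 2) (n_i - Σ_t n_t)` for every `n`;
hence `e_i ⊙ y = 0`, `D ⊙ y < 0` and `y ⊙ y < 0`, and a positive multiple of `y` lies on the
hyperboloid. For `n ∈ E₁`, `n ⊙ D = (2 - ρ) Σ_t n_t` gives `Σ_t n_t > 0`, and
`n ⊙ n = 1` reads `2 Σ_t n_t² = 1 + (Σ_t n_t)²`; comparing with `n_i² ≤ Σ_t n_t²` forces
`n_i < Σ_t n_t` unless `n = e_i`. -/

/-- The Lorentz product over `ℝ`, given by the matrix `J_ρ` with diagonal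
entries `1` and off-diagonal entries `-1`. -/
noncomputable def lor {ρ : ℕ} (x y : Fin ρ → ℝ) : ℝ :=
  ∑ i, ∑ j, x i * (if i = j then (1 : ℝ) else -1) * y j

/-- The Lorentz product over `ℤ`. -/
def lorZ {ρ : ℕ} (x y : Fin ρ → ℤ) : ℤ :=
  ∑ i, ∑ j, x i * (if i = j then (1 : ℤ) else -1) * y j

open Finset

theorem sum_sum_ite_one_neg_one_mul {ι R : Type*} [Fintype ι] [DecidableEq ι] [CommRing R]
    (x y : ι → R) :
    ∑ i, ∑ j, x i * (if i = j then 1 else -1) * y j =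
      2 * ∑ t, x t * y t - (∑ t, x t) * ∑ t, y t := by
  have h : ∀ i j, x i * (if i = j then (1 : R) else -1) * y j =
      2 * (if i = j then x i * y j else 0) - x i * y j := by
    intro i j; split_ifs <;> ring
  simp only [h, sum_sub_distrib, ← mul_sum, sum_ite_eq, mem_univ, if_true, sum_mul]

theorem eq_single_one_of_sum_mul_self_eq_one {ι R : Type*} [Fintype ι] [DecidableEq ι]
    [CommRing R] [LinearOrder R] [IsStrictOrderedRing R] {n : ι → R} {i : ι}
    (hi : n i = 1) (h : ∑ t, n t * n t = 1) : n = Pi.single i 1 := by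
  rw [Fintype.sum_eq_add_sum_compl i, hi, mul_one, add_eq_left] at h
  have hzero := (sum_eq_zero_iff_of_nonneg fun t _ => mul_self_nonneg (n t)).mp h
  funext t
  rcases eq_or_ne t i with rfl | ht
  · simpa using hi
  · simpa [ht] using hzero t (by simpa using ht)

variable {ρ : ℕ}

theorem lor_eq (x y : Fin ρ → ℝ) :
    lor x y = 2 * ∑ t, x t * y t - (∑ t, x t) * ∑ t, y t :=
  sum_sum_ite_one_neg_one_mul x y

theorem lorZ_eq (x y : Fin ρ → ℤ) :
    lorZ x y = 2 * ∑ t, x t * y t - (∑ t, x t) * ∑ t, y t :=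
  sum_sum_ite_one_neg_one_mul x y

theorem lor_comm (x y : Fin ρ → ℝ) : lor x y = lor y x := by
  simp only [lor_eq, mul_comm (x _)]; ring

theorem lor_smul_right (c : ℝ) (x y : Fin ρ → ℝ) : lor x (c • y) = c * lor x y := by
  simp only [lor_eq, Pi.smul_apply, smul_eq_mul, ← mul_sum, mul_left_comm _ c]; ring

theorem lor_smul_left (c : ℝ) (x y : Fin ρ → ℝ) : lor (c • x) y = c * lor x y := by
  rw [lor_comm, lor_smul_right, lor_comm]

theorem exists_pos_lor_smul_self_eq_neg_one {y : Fin ρ → ℝ} (hy : lor y y < 0) :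
    ∃ c : ℝ, 0 < c ∧ lor (c • y) (c • y) = -1 := by
  refine ⟨(√(-lor y y))⁻¹, inv_pos.2 (Real.sqrt_pos.2 (neg_pos.2 hy)), ?_⟩
  rw [lor_smul_left, lor_smul_right, ← mul_assoc, ← mul_inv,
    Real.mul_self_sqrt (neg_nonneg.2 hy.le)]
  field_simp [hy.ne]

theorem lorZ_single_self (i : Fin ρ) : lorZ (Pi.single i 1) (Pi.single i 1) = 1 := by
  simp [lorZ_eq, Pi.single_apply]

theorem lorZ_const_one_right (n : Fin ρ → ℤ) :
    lorZ n (fun _ => 1) = (2 - ρ) * ∑ t, n t := by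
  simp only [lorZ_eq, mul_one, sum_const, card_univ, Fintype.card_fin, Int.nsmul_eq_mul]
  ring

theorem apply_lt_sum_of_lorZ_self_eq_one {n : Fin ρ → ℤ} {i : Fin ρ} (hn : lorZ n n = 1)
    (hs : 0 < ∑ t, n t) (hne : n ≠ Pi.single i 1) : n i < ∑ t, n t := by
  rw [lorZ_eq] at hn
  have hsq : n i * n i ≤ ∑ t, n t * n t :=
    single_le_sum (f := fun t => n t * n t) (fun t _ => mul_self_nonneg _) (mem_univ i)
  rcases lt_trichotomy (n i) (∑ t, n t) with hlt | heq | hgt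
  · exact hlt
  · have hs1 : ∑ t, n t = 1 := by nlinarith
    exact absurd (eq_single_one_of_sum_mul_self_eq_one (heq.trans hs1) (by nlinarith)) hne
  · nlinarith

noncomputable def faceCenter (i : Fin ρ) : Fin ρ → ℝ :=
  Pi.single i ((ρ : ℝ) - 2) + fun _ => 1

theorem lor_faceCenter (i : Fin ρ) (n : Fin ρ → ℝ) :
    lor n (faceCenter i) = 2 * (ρ - 2) * (n i - ∑ t, n t) := by
  simp only [faceCenter, lor_eq, Pi.add_apply, Pi.single_apply, mul_add, mul_ite, mul_zero,
    mul_one, sum_add_distrib, sum_ite_eq', mem_univ, if_true, sum_const, card_univ,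
    Fintype.card_fin, nsmul_eq_mul]
  ring

theorem lor_faceCenter_self (i : Fin ρ) :
    lor (faceCenter i) (faceCenter i) = -2 * (ρ - 1) * (ρ - 2) := by
  rw [lor_faceCenter]
  simp only [faceCenter, Pi.add_apply, Pi.single_eq_same, sum_add_distrib, sum_pi_single',
    mem_univ, if_true, sum_const, card_univ, Fintype.card_fin, nsmul_eq_mul, mul_one]
  ring

theorem basis_vectors_are_faces_general (ρ : ℕ) (hρ₁ : 4 ≤ ρ)
    (i : Fin ρ) :
    (lorZ (Pi.single i 1) (Pi.single i 1) = 1 ∧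
      lorZ (Pi.single i 1) (fun _ => 1) < 0) ∧
    ∃ x : Fin ρ → ℝ,
      lor x x = -1 ∧ lor x (fun _ => 1) < 0 ∧
      lor (fun t => ((Pi.single i 1 : Fin ρ → ℤ) t : ℝ)) x = 0 ∧
      ∀ n : Fin ρ → ℤ, lorZ n n = 1 → lorZ n (fun _ => 1) < 0 →
        n ≠ Pi.single i 1 → lor (fun t => (n t : ℝ)) x < 0 := by
  have hρR : (4 : ℝ) ≤ ρ := by exact_mod_cast hρ₁
  obtain ⟨c, hc, hx⟩ := exists_pos_lor_smul_self_eq_neg_one (y := faceCenter i) <| by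
    rw [lor_faceCenter_self]; nlinarith
  refine ⟨⟨lorZ_single_self i, ?_⟩, c • faceCenter i, hx, ?_, ?_, ?_⟩
  · rw [lorZ_const_one_right]; simp only [sum_pi_single', mem_univ, if_true, mul_one]; omega
  · rw [lor_comm, lor_smul_right, lor_faceCenter]
    refine mul_neg_of_pos_of_neg hc (mul_neg_of_pos_of_neg (by linarith) ?_)
    simp only [sum_const, card_univ, Fintype.card_fin, nsmul_eq_mul, mul_one]; linarith
  · rw [lor_smul_right, lor_faceCenter]; simp [Pi.single_apply]
  · intro n hn hD hne
    rw [lorZ_const_one_right] at hD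
    have hs : 0 < ∑ t, n t := pos_of_mul_neg_right hD (by omega)
    have hlt : (n i : ℝ) < ∑ t, (n t : ℝ) := by
      exact_mod_cast apply_lt_sum_of_lorZ_self_eq_one hn hs hne
    rw [lor_smul_right, lor_faceCenter]
    exact mul_neg_of_pos_of_neg hc (mul_neg_of_pos_of_neg (by linarith) (by linarith))

/-- For `4 ≤ ρ ≤ 10`, each standard basis vector `e_i` lies in
`E₁ = {n ∈ ℤ^ρ : n⊙n = 1, n⊙D < 0}` and the hyperplane `H_{e_i}` is a face of
the Apollonian polyhedron `K_ρ = ∩_{n ∈ E₁} {x : n⊙x ≤ 0}`: there is a point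
`x` of the hyperbolic sheet lying on `H_{e_i}` and strictly off every other
hyperplane `H_n` with `n ∈ E₁`. -/
theorem basis_vectors_are_faces (ρ : ℕ) (hρ₁ : 4 ≤ ρ) (hρ₂ : ρ ≤ 10)
    (i : Fin ρ) :
    (lorZ (Pi.single i 1) (Pi.single i 1) = 1 ∧
      lorZ (Pi.single i 1) (fun _ => 1) < 0) ∧
    ∃ x : Fin ρ → ℝ,
      lor x x = -1 ∧ lor x (fun _ => 1) < 0 ∧
      lor (fun t => ((Pi.single i 1 : Fin ρ → ℤ) t : ℝ)) x = 0 ∧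
      ∀ n : Fin ρ → ℤ, lorZ n n = 1 → lorZ n (fun _ => 1) < 0 →
        n ≠ Pi.single i 1 → lor (fun t => (n t : ℝ)) x < 0 :=
  basis_vectors_are_faces_general ρ hρ₁ i
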